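/- The value translation preserves typing at recursive and tuple types: if an F value v has F type τ and translating it into T yields TAL word value w together with extended memory M', then w has TAL type τ⁺ (the translation of τ) under the heap typing of M'. -/

import Mathlib

/-! Core formalization of the functional language F from "FunTAL: Reasonably
Mixing a Functional Language with Assembly": simply-typed call-by-value
language with unit, integers, arithmetic primitives, test-if-zero,
functions, iso-recursive types (fold/unfold) and tuples with projection.
De Bruijn indices are used for term and type variables. -/

namespace FunTAL

/-- F types. `mu` binds type variable 0 (de Bruijn). -/
inductive Ty : Type
  | tvar : ℕ → Ty
  | unit : Ty
  | int : Ty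
  | arrow : Ty → Ty → Ty
  | mu : Ty → Ty
  | prod : List Ty → Ty

-- Substitution of a (closed) type `u` for type variable `k`.
mutual
def substTy (u : Ty) : ℕ → Ty → Ty
  | k, .tvar n => if n = k then u else if k < n then .tvar (n-1) else .tvar n
  | _, .unit => .unit
  | _, .int => .int
  | k, .arrow t1 t2 => .arrow (substTy u k t1) (substTy u k t2)
  | k, .mu t => .mu (substTy u (k+1) t)
  | k, .prod ts => .prod (substTyList u k ts)
def substTyList (u : Ty) : ℕ → List Ty → List Ty
  | _, [] => []
  | k, t :: ts => substTy u k t :: substTyList u k ts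
end

/-- Arithmetic primitives. -/
inductive Prim : Type
  | add | sub | mul
deriving DecidableEq

def Prim.denote : Prim → ℤ → ℤ → ℤ
  | .add, a, b => a + b
  | .sub, a, b => a - b
  | .mul, a, b => a * b

/-- F expressions (de Bruijn indices for term variables). -/
inductive Exp : Type
  | var : ℕ → Exp
  | unit : Exp
  | int : ℤ → Exp
  | prim : Prim → Exp → Exp → Exp
  | if0 : Exp → Exp → Exp → Exp
  | lam : Ty → Exp → Exp
  | app : Exp → Exp → Exp
  | fold : Ty → Exp → Exp
  | unfold : Exp → Exp
  | tuple : List Exp → Exp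
  | proj : ℕ → Exp → Exp

/-- Values: unit, integers, lambdas, fold of a value, tuples of values. -/
inductive Value : Exp → Prop
  | unit : Value .unit
  | int : ∀ n, Value (.int n)
  | lam : ∀ τ b, Value (.lam τ b)
  | fold : ∀ τ v, Value v → Value (.fold τ v)
  | tuple : ∀ vs, (∀ v ∈ vs, Value v) → Value (.tuple vs)

-- Capture-avoiding substitution of a closed value `u` for variable `k`.
mutual
def subst (u : Exp) : ℕ → Exp → Exp
  | k, .var n => if n = k then u else if k < n then .var (n-1) else .var n
  | _, .unit => .unit
  | _, .int n => .int n
  | k, .prim p e1 e2 => .prim p (subst u k e1) (subst u k e2)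
  | k, .if0 e e1 e2 => .if0 (subst u k e) (subst u k e1) (subst u k e2)
  | k, .lam τ b => .lam τ (subst u (k+1) b)
  | k, .app e1 e2 => .app (subst u k e1) (subst u k e2)
  | k, .fold τ e => .fold τ (subst u k e)
  | k, .unfold e => .unfold (subst u k e)
  | k, .tuple es => .tuple (substList u k es)
  | k, .proj i e => .proj i (subst u k e)
def substList (u : Exp) : ℕ → List Exp → List Exp
  | _, [] => []
  | k, e :: es => subst u k e :: substList u k es
end

-- The typing judgment Γ ⊢ e : τ.
mutual
inductive HasType : List Ty → Exp → Ty → Prop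
  | var : ∀ {Γ n τ}, Γ[n]? = some τ → HasType Γ (.var n) τ
  | unit : ∀ {Γ}, HasType Γ .unit .unit
  | int : ∀ {Γ n}, HasType Γ (.int n) .int
  | prim : ∀ {Γ p e1 e2}, HasType Γ e1 .int → HasType Γ e2 .int →
      HasType Γ (.prim p e1 e2) .int
  | if0 : ∀ {Γ e e1 e2 τ}, HasType Γ e .int → HasType Γ e1 τ → HasType Γ e2 τ →
      HasType Γ (.if0 e e1 e2) τ
  | lam : ∀ {Γ τ1 b τ2}, HasType (τ1 :: Γ) b τ2 →
      HasType Γ (.lam τ1 b) (.arrow τ1 τ2)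
  | app : ∀ {Γ e1 e2 τ1 τ2}, HasType Γ e1 (.arrow τ1 τ2) → HasType Γ e2 τ1 →
      HasType Γ (.app e1 e2) τ2
  | fold : ∀ {Γ e τ}, HasType Γ e (substTy (.mu τ) 0 τ) →
      HasType Γ (.fold (.mu τ) e) (.mu τ)
  | unfold : ∀ {Γ e τ}, HasType Γ e (.mu τ) →
      HasType Γ (.unfold e) (substTy (.mu τ) 0 τ)
  | tuple : ∀ {Γ es τs}, HasTypeList Γ es τs → HasType Γ (.tuple es) (.prod τs)
  | proj : ∀ {Γ e τs i τ}, HasType Γ e (.prod τs) → τs[i]? = some τ →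
      HasType Γ (.proj i e) τ
inductive HasTypeList : List Ty → List Exp → List Ty → Prop
  | nil : ∀ {Γ}, HasTypeList Γ [] []
  | cons : ∀ {Γ e τ es τs}, HasType Γ e τ → HasTypeList Γ es τs →
      HasTypeList Γ (e :: es) (τ :: τs)
end

/-- Evaluation contexts enforcing left-to-right call-by-value evaluation. -/
inductive ECtx : Type
  | hole : ECtx
  | prim1 : Prim → ECtx → Exp → ECtx
  | prim2 : Prim → ∀ v : Exp, Value v → ECtx → ECtx
  | if0C : ECtx → Exp → Exp → ECtx
  | app1 : ECtx → Exp → ECtx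
  | app2 : ∀ v : Exp, Value v → ECtx → ECtx
  | foldC : Ty → ECtx → ECtx
  | unfoldC : ECtx → ECtx
  | tupleC : ∀ vs : List Exp, (∀ v ∈ vs, Value v) → ECtx → List Exp → ECtx
  | projC : ℕ → ECtx → ECtx

/-- Plugging an expression into an evaluation context. -/
def plug : ECtx → Exp → Exp
  | .hole, e => e
  | .prim1 p E e2, e => .prim p (plug E e) e2
  | .prim2 p v _ E, e => .prim p v (plug E e)
  | .if0C E e1 e2, e => .if0 (plug E e) e1 e2
  | .app1 E e2, e => .app (plug E e) e2
  | .app2 v _ E, e => .app v (plug E e)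
  | .foldC τ E, e => .fold τ (plug E e)
  | .unfoldC E, e => .unfold (plug E e)
  | .tupleC vs _ E es, e => .tuple (vs ++ plug E e :: es)
  | .projC i E, e => .proj i (plug E e)

/-- Primitive reduction steps (redex contractions). -/
inductive HeadStep : Exp → Exp → Prop
  | beta : ∀ τ b v, Value v → HeadStep (.app (.lam τ b) v) (subst v 0 b)
  | prim : ∀ p n1 n2, HeadStep (.prim p (.int n1) (.int n2)) (.int (p.denote n1 n2))
  | if0_true : ∀ e1 e2, HeadStep (.if0 (.int 0) e1 e2) e1
  | if0_false : ∀ n e1 e2, n ≠ 0 → HeadStep (.if0 (.int n) e1 e2) e2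
  | unfold_fold : ∀ τ v, Value v → HeadStep (.unfold (.fold τ v)) v
  | proj : ∀ vs i v, (∀ w ∈ vs, Value w) → vs[i]? = some v →
      HeadStep (.proj i (.tuple vs)) v

/-- A redex is an expression that can take a primitive reduction step. -/
def Redex (e : Exp) : Prop := ∃ e', HeadStep e e'

/-- The small-step call-by-value operational semantics: reduce a redex
inside an evaluation context. -/
inductive Step : Exp → Exp → Prop
  | mk : ∀ (E : ECtx) (r r' : Exp), HeadStep r r' → Step (plug E r) (plug E r')


-- TAL types: type variables, unit, int, recursive types, and boxed heap
-- types; heap types are tuples and code types ∀[Δ].{χ; σ; q} with a number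
-- of bound stack/lifetime variables, a register-file typing, a stack typing
-- and a return-marker register; stack typings are stack-tail variables ζ or
-- a type consed onto a stack typing.  (Registers and return markers are
-- modeled as natural numbers; code-type binders ζ, ε live in a separate
-- namespace from the type variables α bound by μ.)
mutual
inductive TTy : Type
  | tvar : ℕ → TTy
  | unit : TTy
  | int : TTy
  | mu : TTy → TTy
  | box : HTy → TTy
inductive HTy : Type
  | tup : List TTy → HTy
  | code : ℕ → List (ℕ × TTy) → STy → ℕ → HTy
inductive STy : Type
  | szeta : ℕ → STy
  | scons : TTy → STy → STy
end

-- The boundary type translation (·)⁺ from F types to TAL types: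
--   α⁺ = α, unit⁺ = unit, int⁺ = int, (μα.τ)⁺ = μα.(τ⁺),
--   ⟨τ⃗⟩⁺ = box ⟨τ⃗⁺⟩, and
--   (τ → τ')⁺ = box ∀[ζ,ε].{ra : box ∀[].{r1 : τ'⁺; ζ; ε}; τ⁺ :: ζ; ra},
-- where ra is register 0 and r1 is register 1.
mutual
def transTy : Ty → TTy
  | .tvar n => .tvar n
  | .unit => .unit
  | .int => .int
  | .mu t => .mu (transTy t)
  | .prod ts => .box (.tup (transTyList ts))
  | .arrow t1 t2 =>
      .box (.code 2 [(0, .box (.code 0 [(1, transTy t2)] (.szeta 0) 1))]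
        (.scons (transTy t1) (.szeta 0)) 0)
def transTyList : List Ty → List TTy
  | [] => []
  | t :: ts => transTy t :: transTyList ts
end

-- Capture-avoiding substitution of a closed TAL type `u` for type
-- variable `k` (the binders of code types bind stack/lifetime variables,
-- which live in a separate namespace from the μ-bound type variables).
mutual
def substT (u : TTy) : ℕ → TTy → TTy
  | k, .tvar n => if n = k then u else if k < n then .tvar (n-1) else .tvar n
  | _, .unit => .unit
  | _, .int => .int
  | k, .mu t => .mu (substT u (k+1) t)
  | k, .box h => .box (substH u k h)
def substH (u : TTy) : ℕ → HTy → HTy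
  | k, .tup ts => .tup (substTList u k ts)
  | k, .code nb chi s r => .code nb (substChi u k chi) (substS u k s) r
def substTList (u : TTy) : ℕ → List TTy → List TTy
  | _, [] => []
  | k, t :: ts => substT u k t :: substTList u k ts
def substChi (u : TTy) : ℕ → List (ℕ × TTy) → List (ℕ × TTy)
  | _, [] => []
  | k, (r, t) :: rest => (r, substT u k t) :: substChi u k rest
def substS (u : TTy) : ℕ → STy → STy
  | _, .szeta n => .szeta n
  | k, .scons t s => .scons (substT u k t) (substS u k s)
end


-- TAL word values: unit, integers, fold of a word value at a recursive
-- type, and heap locations.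
inductive TWord : Type
  | unit : TWord
  | int : ℤ → TWord
  | fold : TTy → TWord → TWord
  | loc : ℕ → TWord

-- TAL heap values: tuples of word values, and code blocks; the code blocks
-- produced by the value translation wrap an F function (of the given
-- argument and result type) behind an import boundary, following the
-- calling convention.
inductive HVal : Type
  | tup : List TWord → HVal
  | codeOfLam : Ty → Ty → Exp → HVal

/-- A TAL memory: a heap mapping locations (indices) to heap values. -/
abbrev TMem : Type := List HVal

-- The type-directed value translation (τ)ᵀᶠ(v with M) = (w, M') from F
-- values to TAL word values, threading the TAL memory M: integers and unit
-- map to themselves, fold values map to fold of the translated unfolded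
-- value at the translated recursive type, tuples allocate a fresh heap
-- location holding the componentwise-translated tuple, and functions
-- allocate a fresh code block wrapping the F function.
mutual
def transTF : Ty → Exp → TMem → Option (TWord × TMem)
  | .int, .int n, M => some (.int n, M)
  | .unit, .unit, M => some (.unit, M)
  | .mu t, .fold _ v, M =>
      (transTF (substTy (.mu t) 0 t) v M).map
        fun p => (.fold (transTy (.mu t)) p.1, p.2)
  | .prod ts, .tuple vs, M =>
      (transTFList ts vs M).map fun p => (.loc p.2.length, p.2 ++ [.tup p.1])
  | .arrow t1 t2, .lam _ b, M => some (.loc M.length, M ++ [.codeOfLam t1 t2 b])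
  | _, _, _ => none
def transTFList : List Ty → List Exp → TMem → Option (List TWord × TMem)
  | [], [], M => some ([], M)
  | t :: ts, v :: vs, M =>
      match transTF t v M with
      | none => none
      | some (w, M') => (transTFList ts vs M').map fun p => (w :: p.1, p.2)
  | _, _, _ => none
end

-- The type-directed value translation (τ)ᶠᵀ(w with M) from TAL word values
-- to F values (defined with a fuel parameter, since the recursive-type case
-- recurses at the substituted type): integers and unit map to themselves,
-- fold maps to fold of the translated unfolding, and a location of tuple
-- type is translated by looking up the tuple in memory and translating it
-- componentwise.
mutual
def transFT : ℕ → Ty → TWord → TMem → Option (Exp × TMem)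
  | 0, _, _, _ => none
  | _+1, .int, .int n, M => some (.int n, M)
  | _+1, .unit, .unit, M => some (.unit, M)
  | fuel+1, .mu t, .fold _ w, M =>
      (transFT fuel (substTy (.mu t) 0 t) w M).map
        fun p => (.fold (.mu t) p.1, p.2)
  | fuel+1, .prod ts, .loc l, M =>
      match M[l]? with
      | some (.tup ws) => (transFTList fuel ts ws M).map fun p => (.tuple p.1, p.2)
      | _ => none
  | _+1, _, _, _ => none
def transFTList : ℕ → List Ty → List TWord → TMem → Option (List Exp × TMem)
  | _, [], [], M => some ([], M)
  | fuel+1, t :: ts, w :: ws, M =>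
      match transFT fuel t w M with
      | none => none
      | some (v, M') => (transFTList fuel ts ws M').map fun p => (v :: p.1, p.2)
  | _, _, _, _ => none
end

/-- The heap type of the code block produced by translating an F function of
type `τ1 → τ2`: ∀[ζ,ε].{ra : box ∀[].{r1 : τ2⁺; ζ; ε}; τ1⁺ :: ζ; ra}. -/
def arrowH (t1 t2 : Ty) : HTy :=
  .code 2 [(0, .box (.code 0 [(1, transTy t2)] (.szeta 0) 1))]
    (.scons (transTy t1) (.szeta 0)) 0

/-- Typing of TAL word values under a heap typing `Ψ`: heap locations are
assigned the boxed type of their heap contents. -/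
inductive TWordTy (Ψ : List HTy) : TWord → TTy → Prop
  | unit : TWordTy Ψ .unit .unit
  | int : ∀ n, TWordTy Ψ (.int n) .int
  | fold : ∀ t w, TWordTy Ψ w (substT (.mu t) 0 t) →
      TWordTy Ψ (.fold (.mu t) w) (.mu t)
  | loc : ∀ l h, Ψ[l]? = some h → TWordTy Ψ (.loc l) (.box h)

/-- Typing of TAL heap values under a heap typing `Ψ`. -/
def HValTy (Ψ : List HTy) : HVal → HTy → Prop
  | .tup ws, .tup ts => List.Forall₂ (TWordTy Ψ) ws ts
  | .codeOfLam t1 t2 b, h => h = arrowH t1 t2 ∧ HasType [t1] b t2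
  | _, _ => False

/-- A memory `M` has heap typing `Ψ` when each heap value has the
corresponding heap type. -/
def MemTy (M : TMem) (Ψ : List HTy) : Prop := List.Forall₂ (HValTy Ψ) M Ψ

/-! Induction on the typing derivation, threading the heap typing: every allocation
appends a heap value that is well typed under the extended heap typing, and word and heap
value typings are stable under extending the heap typing. At a recursive type one also
needs that the type translation commutes with substitution, so that the unfolded value
is translated at the unfolding of the translated type. -/

mutual
theorem transTy_substTy (u : Ty) : ∀ (k : ℕ) (t : Ty),
    transTy (substTy u k t) = substT (transTy u) k (transTy t)
  | k, .tvar n => by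
      unfold substTy transTy substT
      split_ifs <;> rfl
  | _, .unit => rfl
  | _, .int => rfl
  | k, .arrow t1 t2 => by
      simp only [substTy, transTy, substT, substH, substChi, substS,
        transTy_substTy u k t1, transTy_substTy u k t2]
  | k, .mu t => by
      simp only [substTy, transTy, substT, transTy_substTy u (k+1) t]
  | k, .prod ts => by
      simp only [substTy, transTy, substT, substH, transTyList_substTyList u k ts]
theorem transTyList_substTyList (u : Ty) : ∀ (k : ℕ) (ts : List Ty),
    transTyList (substTyList u k ts) = substTList (transTy u) k (transTyList ts)
  | _, [] => rfl
  | k, t :: ts => by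
      simp only [substTyList, transTyList, substTList, transTy_substTy u k t,
        transTyList_substTyList u k ts]
end

section HeapTyping

variable {Ψ Ψ' : List HTy}

theorem TWordTy.mono (hΨ : Ψ <+: Ψ') {w : TWord} {t : TTy} (hw : TWordTy Ψ w t) :
    TWordTy Ψ' w t := by
  induction hw with
  | unit => exact .unit
  | int n => exact .int n
  | fold t w _ ih => exact .fold t w ih
  | loc l h hl =>
      obtain ⟨hlt, rfl⟩ := List.getElem?_eq_some_iff.1 hl
      exact .loc l _ (List.prefix_iff_getElem?.1 hΨ l hlt)

theorem HValTy.mono (hΨ : Ψ <+: Ψ') {a : HVal} {h : HTy} (ha : HValTy Ψ a h) :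
    HValTy Ψ' a h := by
  cases a with
  | tup ws =>
      cases h with
      | tup ts => exact ha.imp fun _ _ => TWordTy.mono hΨ
      | code => exact ha.elim
  | codeOfLam => exact ha

theorem MemTy.alloc {M : TMem} {a : HVal} {h : HTy} (hM : MemTy M Ψ)
    (ha : HValTy (Ψ ++ [h]) a h) :
    MemTy (M ++ [a]) (Ψ ++ [h]) ∧ TWordTy (Ψ ++ [h]) (.loc M.length) (.box h) := by
  refine ⟨List.rel_append (hM.imp fun _ _ => HValTy.mono (List.prefix_append _ _))
    (.cons ha .nil), .loc _ _ ?_⟩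
  rw [hM.length_eq, List.getElem?_concat_length]

end HeapTyping

mutual
theorem transTF_wellTyped {M M' : TMem} {w : TWord} {Ψ : List HTy} :
    ∀ {v τ}, HasType [] v τ → transTF τ v M = some (w, M') → MemTy M Ψ →
      ∃ Ψ', Ψ <+: Ψ' ∧ MemTy M' Ψ' ∧ TWordTy Ψ' w (transTy τ)
  | _, _, .unit, htr, hM => by
      cases htr
      exact ⟨Ψ, List.prefix_rfl, hM, .unit⟩
  | _, _, .int, htr, hM => by
      cases htr
      exact ⟨Ψ, List.prefix_rfl, hM, .int _⟩
  | _, .arrow τ1 τ2, .lam hb, htr, hM => by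
      cases htr
      obtain ⟨hM', hw⟩ := hM.alloc (a := .codeOfLam τ1 τ2 _) ⟨rfl, hb⟩
      exact ⟨_, List.prefix_append _ _, hM', hw⟩
  | _, .mu t, .fold hv, htr, hM => by
      obtain ⟨⟨w₀, M₀⟩, hv_tr, hw⟩ := Option.map_eq_some_iff.1 htr
      cases hw
      obtain ⟨Ψ', hΨ', hM', hw₀⟩ := transTF_wellTyped hv hv_tr hM
      rw [transTy_substTy] at hw₀
      exact ⟨Ψ', hΨ', hM', .fold _ _ hw₀⟩
  | _, .prod τs, .tuple hvs, htr, hM => by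
      obtain ⟨⟨ws, M₀⟩, hvs_tr, hw⟩ := Option.map_eq_some_iff.1 htr
      cases hw
      obtain ⟨Ψ₀, hΨ₀, hM₀, hws⟩ := transTFList_wellTyped hvs hvs_tr hM
      obtain ⟨hM', hw⟩ := hM₀.alloc (a := .tup ws) (h := .tup (transTyList τs))
        (hws.imp fun _ _ => TWordTy.mono (List.prefix_append _ _))
      exact ⟨_, hΨ₀.trans (List.prefix_append _ _), hM', hw⟩
  -- the remaining rules type non-values, on which the translation is undefined
  | _, _, .var _, htr, _ => by simp [transTF] at htr
  | _, _, .prim _ _, htr, _ => by simp [transTF] at htr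
  | _, τ, .if0 _ _ _, htr, _ => by cases τ <;> simp [transTF] at htr
  | _, τ, .app _ _, htr, _ => by cases τ <;> simp [transTF] at htr
  | _, _, .unfold _, htr, _ => by
      revert htr
      generalize substTy _ 0 _ = τ
      cases τ <;> simp [transTF]
  | _, τ, .proj _ _, htr, _ => by cases τ <;> simp [transTF] at htr
theorem transTFList_wellTyped {M M' : TMem} {ws : List TWord} {Ψ : List HTy} :
    ∀ {vs τs}, HasTypeList [] vs τs → transTFList τs vs M = some (ws, M') → MemTy M Ψ →
      ∃ Ψ', Ψ <+: Ψ' ∧ MemTy M' Ψ' ∧ List.Forall₂ (TWordTy Ψ') ws (transTyList τs)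
  | _, _, .nil, htr, hM => by
      cases htr
      exact ⟨Ψ, List.prefix_rfl, hM, .nil⟩
  | _, _, .cons (e := v) (τ := τ) hv hvs, htr, hM => by
      obtain ⟨⟨w, M₀⟩, hv_tr⟩ : ∃ p, transTF τ v M = some p := by
        cases h : transTF τ v M <;> simp_all [transTFList]
      simp only [transTFList, hv_tr] at htr
      obtain ⟨⟨ws', M₁⟩, hvs_tr, hws⟩ := Option.map_eq_some_iff.1 htr
      cases hws
      obtain ⟨Ψ₀, hΨ₀, hM₀, hw⟩ := transTF_wellTyped hv hv_tr hM
      obtain ⟨Ψ₁, hΨ₁, hM₁, hws'⟩ := transTFList_wellTyped hvs hvs_tr hM₀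
      exact ⟨Ψ₁, hΨ₀.trans hΨ₁, hM₁, .cons (hw.mono hΨ₁) hws'⟩
end

/-- **The value translation preserves typing** (in particular at recursive
and tuple types): if an F value `v` has F type `τ` and translating it into T
yields the TAL word value `w` together with extended memory `M'`, then `w`
has TAL type `τ⁺` under the heap typing of `M'` (which extends that of `M`). -/
theorem transTF_preserves_typing (v : Exp) (τ : Ty) (M M' : TMem) (w : TWord)
    (Ψ : List HTy) (hv : Value v) (ht : HasType [] v τ)
    (htr : transTF τ v M = some (w, M')) (hM : MemTy M Ψ) :
    ∃ Ψ' : List HTy, Ψ <+: Ψ' ∧ MemTy M' Ψ' ∧ TWordTy Ψ' w (transTy τ) :=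
  transTF_wellTyped ht htr hM

end FunTAL
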